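/- Let G be a connected simple graph and let B be a 2-connected (biconnected) subgraph of G with vertex set V(B), and let s', t' ∈ V(B) be distinct. For any subset M ⊆ V(B) with |M| ≥ 2, there exist vertices u, v ∈ M and an (s',u)-path p₁ and a (v,t')-path p₂ in B such that p₁ and p₂ are vertex-disjoint and each intersects M only in its endpoint u (respectively v). -/

import Mathlib

open SimpleGraph Walk

section helpers
variable {V : Type*} {H : SimpleGraph V}

lemma firstHit (S : Set V) [DecidablePred (· ∈ S)] :
    ∀ {x y : V} (P : H.Walk x y), y ∈ S →
      ∃ (w : V) (P' : H.Walk x w), w ∈ S ∧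
        (∀ z ∈ P'.support, z ∈ S → z = w) ∧
        (∀ z ∈ P'.support, z ∈ P.support) ∧ (P.IsPath → P'.IsPath) := by
  intro x y P
  induction P with
  | nil =>
    intro hy
    exact ⟨_, Walk.nil, hy, by simp, by simp, fun _ => Walk.IsPath.nil⟩
  | @cons a b c h rest ih =>
    intro hy
    by_cases hx : a ∈ S
    · exact ⟨a, Walk.nil, hx, by simp, by simp, fun _ => Walk.IsPath.nil⟩
    · obtain ⟨w, P', hw, hmeet, hsub, hpath⟩ := ih hy
      refine ⟨w, Walk.cons h P', hw, ?_, ?_, ?_⟩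
      · intro z hz hzS
        rcases (by simpa using hz : z = a ∨ z ∈ P'.support) with rfl | hz'
        · exact absurd hzS hx
        · exact hmeet z hz' hzS
      · intro z hz
        rcases (by simpa using hz : z = a ∨ z ∈ P'.support) with rfl | hz'
        · simp
        · simp [hsub z hz']
      · intro hP
        rw [Walk.cons_isPath_iff] at hP ⊢
        exact ⟨hpath hP.1, fun hc => hP.2 (hsub a hc)⟩

lemma end_not_mem_takeUntil [DecidableEq V] {a c u : V} {p : H.Walk a c}
    (hp : p.IsPath) (hu : u ∈ p.support) (hne : u ≠ c) :
    c ∉ (p.takeUntil u hu).support := by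
  intro hc
  have hnodup : ((p.takeUntil u hu).append (p.dropUntil u hu)).support.Nodup := by
    rw [Walk.take_spec]; exact hp.support_nodup
  rw [Walk.support_append, List.nodup_append] at hnodup
  have hcd : c ∈ (p.dropUntil u hu).support.tail := by
    have h1 : c ∈ (p.dropUntil u hu).support := Walk.end_mem_support _
    rw [Walk.support_eq_cons (p.dropUntil u hu)] at h1
    rcases List.mem_cons.mp h1 with h1 | h1
    · exact absurd h1.symm hne
    · exact h1
  exact hnodup.2.2 c hc c hcd rfl

lemma combineAux [DecidableEq V] {a b b' w : V} (Q1 Q2 : H.Walk a b') (P' : H.Walk b w)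
    (hQ1 : Q1.IsPath) (hQ2 : Q2.IsPath) (hP' : P'.IsPath)
    (hinter : ∀ x, x ∈ Q1.support → x ∈ Q2.support → x = a ∨ x = b')
    (hw1 : w ∈ Q1.support)
    (hPmeet : ∀ z ∈ P'.support, (z ∈ Q1.support ∨ z ∈ Q2.support) → z = w)
    (hb'P : b' ∉ P'.support)
    (hbQ2 : b ∉ Q2.support)
    (hadj : H.Adj b' b) :
    ∃ (p q : H.Walk a b), p.IsPath ∧ q.IsPath ∧
      ∀ x, x ∈ p.support → x ∈ q.support → x = a ∨ x = b := by
  have hwb' : w ≠ b' := fun h => hb'P (h ▸ P'.end_mem_support)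
  refine ⟨(Q1.takeUntil w hw1).append P'.reverse, Q2.concat hadj, ?_, ?_, ?_⟩
  · apply Walk.IsPath.mk'
    rw [Walk.support_append, List.nodup_append]
    have hrevnodup : P'.reverse.support.Nodup := hP'.reverse.support_nodup
    refine ⟨(hQ1.takeUntil hw1).support_nodup, ?_, ?_⟩
    · rw [Walk.support_eq_cons P'.reverse] at hrevnodup
      exact hrevnodup.of_cons
    · intro z hz1 z' hz2 hzz'
      subst hzz'
      have hzP : z ∈ P'.support := by
        have : z ∈ P'.reverse.support := List.mem_of_mem_tail hz2
        simpa [Walk.support_reverse] using this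
      have hzw : z = w := hPmeet z hzP (Or.inl (Walk.support_takeUntil_subset _ hw1 hz1))
      rw [Walk.support_eq_cons P'.reverse] at hrevnodup
      exact List.Nodup.notMem hrevnodup (hzw ▸ hz2)
  · apply Walk.IsPath.mk'
    rw [Walk.support_concat]
    simp only [List.concat_eq_append, List.nodup_append]
    exact ⟨hQ2.support_nodup, List.nodup_singleton _, by simpa using fun x (hx : x ∈ Q2.support) (hxb : x = b) => hbQ2 (hxb ▸ hx)⟩
  · intro x hxp hxq
    rw [Walk.support_concat] at hxq
    simp only [List.concat_eq_append, List.mem_append, List.mem_singleton] at hxq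
    rcases hxq with hxQ2 | rfl
    · left
      rw [Walk.support_append] at hxp
      rcases List.mem_append.mp hxp with hx1 | hx2
      · rcases hinter x (Walk.support_takeUntil_subset _ hw1 hx1) hxQ2 with rfl | rfl
        · rfl
        · exact absurd hx1 (end_not_mem_takeUntil hQ1 hw1 hwb')
      · have hxP : x ∈ P'.support := by
          have : x ∈ P'.reverse.support := List.mem_of_mem_tail hx2
          simpa [Walk.support_reverse] using this
        have hxw : x = w := hPmeet x hxP (Or.inr hxQ2)
        subst hxw
        rcases hinter x hw1 hxQ2 with h | h
        · exact h
        · exact absurd h hwb'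
    · right; rfl

end helpers

lemma twoPaths {V : Type*} [DecidableEq V] (H : SimpleGraph V) (hc : H.Connected)
    (h2 : ∀ x : V, (((⊤ : H.Subgraph).deleteVerts {x}).coe).Connected) :
    ∀ (n : ℕ) (a b : V), a ≠ b → H.dist a b = n →
      ∃ (p q : H.Walk a b), p.IsPath ∧ q.IsPath ∧
        ∀ x, x ∈ p.support → x ∈ q.support → x = a ∨ x = b := by
  intro n
  induction n using Nat.strong_induction_on with
  | _ n IH =>
    intro a b hab hd
    have hd0 : H.dist a b ≠ 0 := by
      rw [SimpleGraph.dist_ne_zero_iff_ne_and_reachable]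
      exact ⟨hab, hc.preconnected a b⟩
    rcases Nat.lt_or_ge n 2 with hn | hn
    · -- n = 1
      interval_cases n
      · exact absurd hd hd0
      · have hadj : H.Adj a b := SimpleGraph.dist_eq_one_iff_adj.mp hd
        refine ⟨Walk.cons hadj Walk.nil, Walk.cons hadj Walk.nil, ?_, ?_, ?_⟩
        · simp [hab]
        · simp [hab]
        · intro x hx _
          simpa using hx
    · -- n ≥ 2
      obtain ⟨wab, hwab⟩ := hc.exists_walk_length_eq_dist a b
      rw [hd] at hwab
      obtain ⟨b', hadj', wr, hwr⟩ := Walk.exists_eq_cons_of_ne (Ne.symm hab) wab.reverse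
      have hadjb : H.Adj b' b := hadj'.symm
      have hlenwr : wr.length = n - 1 := by
        have hh : wab.reverse.length = n := by rw [Walk.length_reverse, hwab]
        rw [hwr, Walk.length_cons] at hh
        omega
      have hdistb' : H.dist a b' = n - 1 := by
        have hle : H.dist a b' ≤ n - 1 := by
          simpa [hlenwr] using SimpleGraph.dist_le wr.reverse
        have hge : n ≤ H.dist a b' + 1 := by
          have htr := hc.dist_triangle (u := a) (v := b') (w := b)
          have : H.dist b' b ≤ 1 := SimpleGraph.dist_le (Walk.cons hadjb Walk.nil)
          omega
        omega
      have hab' : a ≠ b' := by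
        intro h
        rw [← h] at hdistb'
        simp [SimpleGraph.dist_self] at hdistb'
        omega
      obtain ⟨Q1, Q2, hQ1, hQ2, hinter⟩ := IH (n-1) (by omega) a b' hab' hdistb'
      have hbneb' : b ≠ b' := fun h => (H.irrefl (h ▸ hadjb))
      by_cases hbQ1 : b ∈ Q1.support
      · have hbQ2 : b ∉ Q2.support := by
          intro hb2
          rcases hinter b hbQ1 hb2 with rfl | rfl
          · exact hab rfl
          · exact hbneb' rfl
        refine ⟨Q1.takeUntil b hbQ1, Q2.concat hadjb, hQ1.takeUntil hbQ1, ?_, ?_⟩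
        · apply Walk.IsPath.mk'
          rw [Walk.support_concat]
          simp only [List.concat_eq_append, List.nodup_append]
          exact ⟨hQ2.support_nodup, List.nodup_singleton _, by simpa using fun x (hx : x ∈ Q2.support) (hxb : x = b) => hbQ2 (hxb ▸ hx)⟩
        · intro x hxp hxq
          rw [Walk.support_concat] at hxq
          simp only [List.concat_eq_append, List.mem_append, List.mem_singleton] at hxq
          rcases hxq with hxQ2 | rfl
          · rcases hinter x (Walk.support_takeUntil_subset _ hbQ1 hxp) hxQ2 with rfl | rfl
            · exact Or.inl rfl
            · exact absurd hxp (end_not_mem_takeUntil hQ1 hbQ1 hbneb')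
          · exact Or.inr rfl
      · by_cases hbQ2 : b ∈ Q2.support
        · have hbQ1' : b ∉ Q1.support := hbQ1
          have hinter' : ∀ x, x ∈ Q2.support → x ∈ Q1.support → x = a ∨ x = b' :=
            fun x h1 h2 => hinter x h2 h1
          obtain ⟨p, q, hp, hq, hpq⟩ :
              ∃ (p q : H.Walk a b), p.IsPath ∧ q.IsPath ∧
                ∀ x, x ∈ p.support → x ∈ q.support → x = a ∨ x = b := by
            refine ⟨Q2.takeUntil b hbQ2, Q1.concat hadjb, hQ2.takeUntil hbQ2, ?_, ?_⟩
            · apply Walk.IsPath.mk'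
              rw [Walk.support_concat]
              simp only [List.concat_eq_append, List.nodup_append]
              exact ⟨hQ1.support_nodup, List.nodup_singleton _, by simpa using fun x (hx : x ∈ Q1.support) (hxb : x = b) => hbQ1' (hxb ▸ hx)⟩
            · intro x hxp hxq
              rw [Walk.support_concat] at hxq
              simp only [List.concat_eq_append, List.mem_append, List.mem_singleton] at hxq
              rcases hxq with hxQ1 | rfl
              · rcases hinter' x (Walk.support_takeUntil_subset _ hbQ2 hxp) hxQ1 with rfl | rfl
                · exact Or.inl rfl
                · exact absurd hxp (end_not_mem_takeUntil hQ2 hbQ2 hbneb')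
              · exact Or.inr rfl
          exact ⟨p, q, hp, hq, hpq⟩
        · -- b not on Q1 or Q2
          have hbv : (b : V) ∈ ((⊤ : H.Subgraph).deleteVerts {b'}).verts := by
            simp [SimpleGraph.Subgraph.deleteVerts_verts, hbneb']
          have hav : (a : V) ∈ ((⊤ : H.Subgraph).deleteVerts {b'}).verts := by
            simp [SimpleGraph.Subgraph.deleteVerts_verts, hab']
          obtain ⟨pw⟩ := (h2 b').preconnected ⟨b, hbv⟩ ⟨a, hav⟩
          set P1 : H.Walk b a := pw.map (SimpleGraph.Subgraph.hom _) with hP1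
          have hP1nb' : ∀ z ∈ P1.support, z ≠ b' := by
            intro z hz
            replace hz : z ∈ (pw.map (SimpleGraph.Subgraph.hom _)).support := hz
            rw [Walk.support_map] at hz
            obtain ⟨⟨zz, hzz⟩, _, rfl⟩ := List.mem_map.mp hz
            simp only [SimpleGraph.Subgraph.deleteVerts_verts, SimpleGraph.Subgraph.verts_top,
              Set.mem_diff, Set.mem_singleton_iff] at hzz
            exact hzz.2
          set P : H.Walk b a := (P1.toPath : H.Walk b a) with hP
          have hPnb' : ∀ z ∈ P.support, z ≠ b' :=
            fun z hz => hP1nb' z (Walk.support_toPath_subset _ hz)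
          classical
          obtain ⟨w, P', hwS, hmeet, hsub, hpath⟩ :=
            firstHit (H := H) {z | z ∈ Q1.support ∨ z ∈ Q2.support} P
              (Or.inl Q1.start_mem_support)
          have hP'path : P'.IsPath := hpath (P1.toPath).2
          have hb'P' : b' ∉ P'.support := fun hc' => (hPnb' b' (hsub b' hc')) rfl
          have hPmeet : ∀ z ∈ P'.support, (z ∈ Q1.support ∨ z ∈ Q2.support) → z = w :=
            fun z hz hzS => hmeet z hz hzS
          rcases hwS with hw1 | hw2
          · exact combineAux Q1 Q2 P' hQ1 hQ2 hP'path hinter hw1 hPmeet hb'P' hbQ2 hadjb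
          · have hinter' : ∀ x, x ∈ Q2.support → x ∈ Q1.support → x = a ∨ x = b' :=
              fun x h1 h2 => hinter x h2 h1
            have hPmeet' : ∀ z ∈ P'.support, (z ∈ Q2.support ∨ z ∈ Q1.support) → z = w :=
              fun z hz hzS => hmeet z hz hzS.symm
            exact combineAux Q2 Q1 P' hQ2 hQ1 hP'path hinter' hw2 hPmeet' hb'P' hbQ1 hadjb

section aug
variable {W : Type*} (B : SimpleGraph W) (M : Set W) (s' t' : W)

/-- `B` plus two apex vertices: `inr false` joined to `s',t'`, `inr true` joined to `M`. -/
def aug : SimpleGraph (W ⊕ Bool) where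
  Adj := fun x y => match x, y with
    | .inl a, .inl b => B.Adj a b
    | .inl a, .inr true => a ∈ M
    | .inr true, .inl a => a ∈ M
    | .inl a, .inr false => a = s' ∨ a = t'
    | .inr false, .inl a => a = s' ∨ a = t'
    | .inr _, .inr _ => False
  symm := ⟨by
    rintro (a | (_|_)) (b | (_|_)) h <;>
      first | exact h.symm | exact h | exact h.elim⟩
  loopless := ⟨by
    rintro (a | (_|_)) h <;> first | exact B.irrefl h | exact h.elim⟩

@[simp] lemma aug_adj_inl_inl {a b : W} : (aug B M s' t').Adj (.inl a) (.inl b) ↔ B.Adj a b := Iff.rfl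
@[simp] lemma aug_adj_inl_inrT {a : W} : (aug B M s' t').Adj (.inl a) (.inr true) ↔ a ∈ M := Iff.rfl
@[simp] lemma aug_adj_inrT_inl {a : W} : (aug B M s' t').Adj (.inr true) (.inl a) ↔ a ∈ M := Iff.rfl
@[simp] lemma aug_adj_inl_inrF {a : W} :
    (aug B M s' t').Adj (.inl a) (.inr false) ↔ a = s' ∨ a = t' := Iff.rfl
@[simp] lemma aug_adj_inrF_inl {a : W} :
    (aug B M s' t').Adj (.inr false) (.inl a) ↔ a = s' ∨ a = t' := Iff.rfl
@[simp] lemma aug_adj_inr_inr {i j : Bool} : ¬ (aug B M s' t').Adj (.inr i) (.inr j) := by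
  cases i <;> cases j <;> exact fun h => h.elim

/-- The inclusion `B →g aug`. -/
def augHom : B →g aug B M s' t' where
  toFun := Sum.inl
  map_rel' := fun h => h

end aug

section augconn
variable {W : Type*} {B : SimpleGraph W} {M : Set W} {s' t' : W}

lemma aug_reach_pivot (hconn : B.Connected) {m1 : W} (hm1 : m1 ∈ M) :
    ∀ x : W ⊕ Bool, (aug B M s' t').Reachable x (.inl s') := by
  intro x
  have hinl : ∀ u : W, (aug B M s' t').Reachable (.inl u) (.inl s') := by
    intro u
    exact (hconn.preconnected u s').map (augHom B M s' t')
  rcases x with u | i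
  · exact hinl u
  · cases i
    · exact (SimpleGraph.Adj.reachable (by simp : (aug B M s' t').Adj (.inr false) (.inl s'))).trans
        (hinl s')
    · exact (SimpleGraph.Adj.reachable (by simpa using hm1 :
        (aug B M s' t').Adj (.inr true) (.inl m1))).trans (hinl m1)

lemma aug_connected (hconn : B.Connected) {m1 : W} (hm1 : m1 ∈ M) :
    (aug B M s' t').Connected := by
  rw [SimpleGraph.connected_iff]
  refine ⟨fun x y => ((aug_reach_pivot hconn hm1 x).trans
    (aug_reach_pivot hconn hm1 y).symm), ⟨.inl s'⟩⟩

end augconn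

section augdel
variable {W : Type*} {B : SimpleGraph W} {M : Set W} {s' t' : W}

lemma augDel_adj {x : W ⊕ Bool} {y z : W ⊕ Bool}
    (hy : y ∈ ((⊤ : (aug B M s' t').Subgraph).deleteVerts {x}).verts)
    (hz : z ∈ ((⊤ : (aug B M s' t').Subgraph).deleteVerts {x}).verts)
    (h : (aug B M s' t').Adj y z) :
    (((⊤ : (aug B M s' t').Subgraph).deleteVerts {x}).coe).Adj ⟨y, hy⟩ ⟨z, hz⟩ := by
  simp only [SimpleGraph.Subgraph.deleteVerts_verts, SimpleGraph.Subgraph.verts_top,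
    Set.mem_diff, Set.mem_univ, true_and, Set.mem_singleton_iff] at hy hz
  simp [SimpleGraph.Subgraph.coe_adj, SimpleGraph.Subgraph.deleteVerts_adj, hy, hz, h]

/-- Map `B` into the deleted-apex graph. -/
def augDelHomInr (B : SimpleGraph W) (M : Set W) (s' t' : W) (i : Bool) :
    B →g (((⊤ : (aug B M s' t').Subgraph).deleteVerts {Sum.inr i}).coe) where
  toFun := fun u => ⟨.inl u, by simp⟩
  map_rel' := by
    intro u v h
    exact augDel_adj (by simp) (by simp) h

/-- Map `B - w` into the graph with `inl w` deleted. -/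
def augDelHomInl (B : SimpleGraph W) (M : Set W) (s' t' : W) (w : W) :
    (((⊤ : B.Subgraph).deleteVerts {w}).coe) →g
      (((⊤ : (aug B M s' t').Subgraph).deleteVerts {Sum.inl w}).coe) where
  toFun := fun u => ⟨.inl u.val, by
    have h2 := u.2
    simp only [SimpleGraph.Subgraph.deleteVerts_verts, SimpleGraph.Subgraph.verts_top,
      Set.mem_diff, Set.mem_univ, true_and, Set.mem_singleton_iff] at h2 ⊢
    exact fun h => h2 (Sum.inl.inj h)⟩
  map_rel' := by
    intro u v h
    have hB : B.Adj u.val v.val := by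
      simp [SimpleGraph.Subgraph.coe_adj, SimpleGraph.Subgraph.deleteVerts_adj] at h
      exact h.2.2
    exact augDel_adj _ _ (by simpa using hB)

lemma aug_h2 (hconn : B.Connected)
    (h2conn : ∀ x : W, (((⊤ : B.Subgraph).deleteVerts {x}).coe).Connected)
    {m1 m2 : W} (hm1 : m1 ∈ M) (hm2 : m2 ∈ M) (hmne : m1 ≠ m2) (hst : s' ≠ t') :
    ∀ x : W ⊕ Bool, (((⊤ : (aug B M s' t').Subgraph).deleteVerts {x}).coe).Connected := by
  classical
  intro x
  rw [SimpleGraph.connected_iff]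
  rcases x with w | i
  · -- delete inl w
    set s₀ : W := if s' = w then t' else s' with hs₀def
    have hs₀w : s₀ ≠ w := by
      rw [hs₀def]; split
      · rename_i hh; exact fun hc => hst (hh.trans hc.symm)
      · rename_i hh; exact hh
    have hs₀st : s₀ = s' ∨ s₀ = t' := by
      rw [hs₀def]; split
      · exact Or.inr rfl
      · exact Or.inl rfl
    set m₀ : W := if m1 = w then m2 else m1 with hm₀def
    have hm₀w : m₀ ≠ w := by
      rw [hm₀def]; split
      · rename_i hh; exact fun hc => hmne (hh.trans hc.symm)
      · rename_i hh; exact hh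
    have hm₀M : m₀ ∈ M := by
      rw [hm₀def]; split
      · exact hm2
      · exact hm1
    have hmemW : ∀ {u : W}, u ≠ w →
        u ∈ ((⊤ : B.Subgraph).deleteVerts {w}).verts := by
      intro u hu; simp [hu]
    have hmemA : ∀ {y : W ⊕ Bool}, y ≠ .inl w →
        y ∈ ((⊤ : (aug B M s' t').Subgraph).deleteVerts {Sum.inl w}).verts := by
      intro y hy; simp [hy]
    set pivot := (augDelHomInl B M s' t' w) ⟨s₀, hmemW hs₀w⟩ with hpivot
    have hreachInl : ∀ (u : W) (hu : u ≠ w),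
        (((⊤ : (aug B M s' t').Subgraph).deleteVerts {Sum.inl w}).coe).Reachable
          ⟨.inl u, hmemA (by simp [hu])⟩ pivot := by
      intro u hu
      exact (((h2conn w).preconnected ⟨u, hmemW hu⟩ ⟨s₀, hmemW hs₀w⟩).map
        (augDelHomInl B M s' t' w))
    refine ⟨fun z y => ?_, ⟨pivot⟩⟩
    suffices hall : ∀ z : ((⊤ : (aug B M s' t').Subgraph).deleteVerts {Sum.inl w}).verts,
        (((⊤ : (aug B M s' t').Subgraph).deleteVerts {Sum.inl w}).coe).Reachable z pivot by
      exact (hall z).trans (hall y).symm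
    rintro ⟨(u | i), hz⟩
    · have hu : u ≠ w := by
        simp only [SimpleGraph.Subgraph.deleteVerts_verts, SimpleGraph.Subgraph.verts_top,
          Set.mem_diff, Set.mem_univ, true_and, Set.mem_singleton_iff] at hz
        exact fun h => hz (by rw [h])
      exact hreachInl u hu
    · cases i
      · refine (SimpleGraph.Adj.reachable ?_).trans (hreachInl s₀ hs₀w)
        exact augDel_adj hz (hmemA (by simp [hs₀w])) (by simpa using hs₀st)
      · refine (SimpleGraph.Adj.reachable ?_).trans (hreachInl m₀ hm₀w)
        exact augDel_adj hz (hmemA (by simp [hm₀w])) (by simpa using hm₀M)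
  · -- delete an apex
    have hmemA : ∀ {y : W ⊕ Bool}, y ≠ .inr i →
        y ∈ ((⊤ : (aug B M s' t').Subgraph).deleteVerts {Sum.inr i}).verts := by
      intro y hy; simp [hy]
    set pivot := (augDelHomInr B M s' t' i) s' with hpivot
    have hreachInl : ∀ (u : W),
        (((⊤ : (aug B M s' t').Subgraph).deleteVerts {Sum.inr i}).coe).Reachable
          ⟨.inl u, hmemA (by simp)⟩ pivot := by
      intro u
      exact ((hconn.preconnected u s').map (augDelHomInr B M s' t' i))
    refine ⟨fun z y => ?_, ⟨pivot⟩⟩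
    suffices hall : ∀ z : ((⊤ : (aug B M s' t').Subgraph).deleteVerts {Sum.inr i}).verts,
        (((⊤ : (aug B M s' t').Subgraph).deleteVerts {Sum.inr i}).coe).Reachable z pivot by
      exact (hall z).trans (hall y).symm
    rintro ⟨(u | j), hz⟩
    · exact hreachInl u
    · have hji : j ≠ i := by
        simp only [SimpleGraph.Subgraph.deleteVerts_verts, SimpleGraph.Subgraph.verts_top,
          Set.mem_diff, Set.mem_univ, true_and, Set.mem_singleton_iff] at hz
        exact fun h => hz (by rw [h])
      cases j
      · refine (SimpleGraph.Adj.reachable ?_).trans (hreachInl s')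
        exact augDel_adj hz (hmemA (by simp)) (by simp)
      · refine (SimpleGraph.Adj.reachable ?_).trans (hreachInl m1)
        exact augDel_adj hz (hmemA (by simp)) (by simpa using hm1)

end augdel

section extract
variable {W : Type*} {B : SimpleGraph W} {M : Set W} {s' t' : W}

lemma aug_project :
    ∀ {x y : W ⊕ Bool} (r : (aug B M s' t').Walk x y),
      (∀ z ∈ r.support, ∃ u : W, z = Sum.inl u) → ∀ (x' y' : W),
      x = Sum.inl x' → y = Sum.inl y' →
      ∃ rB : B.Walk x' y', ∀ u : W, u ∈ rB.support → Sum.inl u ∈ r.support := by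
  intro x y r
  induction r with
  | nil =>
    intro _ x' y' hx hy
    subst hx
    obtain rfl : x' = y' := Sum.inl.inj hy
    exact ⟨Walk.nil, by simp⟩
  | @cons xx vv yy h rest ih =>
    intro hall x' y' hx hy
    subst hx
    obtain ⟨u', hv⟩ := hall vv (by simp)
    subst hv
    have hB : B.Adj x' u' := by simpa using h
    obtain ⟨rB, hrB⟩ := ih (fun z hz => hall z (by simp [hz])) u' y' rfl hy
    refine ⟨Walk.cons hB rB, ?_⟩
    intro u hu
    rcases (by simpa using hu : u = x' ∨ u ∈ rB.support) with rfl | hu'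
    · simp
    · simp [hrB u hu']

lemma extract {p : (aug B M s' t').Walk (.inr false) (.inr true)} (hp : p.IsPath) :
    ∃ (s₁ u : W), (s₁ = s' ∨ s₁ = t') ∧ u ∈ M ∧
      ∃ pp : B.Walk s₁ u, pp.IsPath ∧ (∀ z ∈ pp.support, z ∈ M → z = u) ∧
        (∀ z ∈ pp.support, (Sum.inl z : W ⊕ Bool) ∈ p.support) := by
  classical
  obtain ⟨c, hadj, p₁, hpc⟩ := Walk.exists_eq_cons_of_ne (by simp) p
  have hp₁ : p₁.IsPath ∧ (Sum.inr false : W ⊕ Bool) ∉ p₁.support := by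
    have := hp
    rw [hpc, Walk.cons_isPath_iff] at this
    exact this
  obtain ⟨s₁, rfl, hs₁⟩ : ∃ s₁ : W, c = Sum.inl s₁ ∧ (s₁ = s' ∨ s₁ = t') := by
    rcases c with u | i
    · exact ⟨u, rfl, by simpa using hadj⟩
    · exact absurd hadj (by simp)
  -- now destruct the end
  obtain ⟨d, hadj₂, r₂, hr₂⟩ := Walk.exists_eq_cons_of_ne (by simp) p₁.reverse
  have hrev : p₁.reverse.IsPath := hp₁.1.reverse
  have hr₂path : r₂.IsPath ∧ (Sum.inr true : W ⊕ Bool) ∉ r₂.support := by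
    have := hrev
    rw [hr₂, Walk.cons_isPath_iff] at this
    exact this
  obtain ⟨m₁, rfl, hm₁⟩ : ∃ m₁ : W, d = Sum.inl m₁ ∧ m₁ ∈ M := by
    rcases d with u | i
    · exact ⟨u, rfl, by simpa using hadj₂⟩
    · exact absurd hadj₂ (by simp)
  have hr₂sub : ∀ z ∈ r₂.support, z ∈ p₁.support := by
    intro z hz
    have : z ∈ p₁.reverse.support := by rw [hr₂]; simp [hz]
    simpa [Walk.support_reverse] using this
  have hall : ∀ z ∈ r₂.support, ∃ u : W, z = Sum.inl u := by
    rintro (u | i) hz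
    · exact ⟨u, rfl⟩
    · cases i
      · exact absurd (hr₂sub _ hz) hp₁.2
      · exact absurd hz hr₂path.2
  obtain ⟨rB, hrB⟩ := aug_project r₂ hall m₁ s₁ rfl rfl
  obtain ⟨u, P', huM, hmeet, hsub, _⟩ :=
    firstHit (H := B) M rB.reverse hm₁
  refine ⟨s₁, u, hs₁, huM, (P'.toPath : B.Walk s₁ u), (P'.toPath).2, ?_, ?_⟩
  · intro z hz hzM
    exact hmeet z (Walk.support_toPath_subset _ hz) hzM
  · intro z hz
    have hz' : z ∈ rB.support := by
      have := hsub z (Walk.support_toPath_subset _ hz)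
      simpa [Walk.support_reverse] using this
    have : (Sum.inl z : W ⊕ Bool) ∈ r₂.support := hrB z hz'
    have h2 : (Sum.inl z : W ⊕ Bool) ∈ p₁.support := hr₂sub _ this
    rw [hpc]
    simp [h2]

end extract


/-- Routing into a set `M` in a 2-connected graph `B` (at least 3 vertices,
connected, and still connected after deleting any single vertex): for distinct
`s', t'` and any set `M` with `|M| ≥ 2`, there are vertices `u, v ∈ M`, an
`(s',u)`-path and a `(v,t')`-path which are vertex-disjoint and meet `M` only
in `u` (resp. `v`). -/
theorem stmt16 {W : Type*} [Fintype W] [DecidableEq W] (B : SimpleGraph W)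
    (hconn : B.Connected) (hcard : 3 ≤ Fintype.card W)
    (h2conn : ∀ x : W, (((⊤ : B.Subgraph).deleteVerts {x}).coe).Connected)
    (M : Set W) (hM : 2 ≤ M.ncard) (s' t' : W) (hst : s' ≠ t') :
    ∃ u v : W, u ∈ M ∧ v ∈ M ∧
      ∃ (p1 : B.Walk s' u) (p2 : B.Walk v t'), p1.IsPath ∧ p2.IsPath ∧
        (∀ w, w ∈ p1.support → w ∉ p2.support) ∧
        (∀ w ∈ p1.support, w ∈ M → w = u) ∧
        (∀ w ∈ p2.support, w ∈ M → w = v) := by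

  classical
  obtain ⟨m1, hm1, m2, hm2, hmne⟩ := (Set.one_lt_ncard M.toFinite).mp (by omega)
  have hAconn : (aug B M s' t').Connected := aug_connected hconn hm1
  have hA2 := aug_h2 (t' := t') hconn h2conn hm1 hm2 hmne hst
  have hne : (Sum.inr false : W ⊕ Bool) ≠ Sum.inr true := by simp
  obtain ⟨p, q, hp, hq, hpq⟩ :=
    twoPaths (aug B M s' t') hAconn hA2 ((aug B M s' t').dist (.inr false) (.inr true))
      (.inr false) (.inr true) hne rfl
  obtain ⟨s₁, u, hs₁, huM, pp, hppPath, hppM, hppSub⟩ := extract hp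
  obtain ⟨s₂, v, hs₂, hvM, qq, hqqPath, hqqM, hqqSub⟩ := extract hq
  have hs12 : s₁ ≠ s₂ := by
    intro h
    have h1 := hppSub s₁ pp.start_mem_support
    have h2 := hqqSub s₂ qq.start_mem_support
    rw [h] at h1
    rcases hpq _ h1 h2 with hh | hh <;> simp at hh
  have hdisj : ∀ z : W, z ∈ pp.support → z ∈ qq.support → False := by
    intro z h1 h2
    rcases hpq _ (hppSub z h1) (hqqSub z h2) with hh | hh <;> simp at hh
  rcases hs₁ with rfl | rfl
  · -- pp starts at s'
    obtain rfl : s₂ = t' := by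
      rcases hs₂ with h | h
      · exact absurd h.symm hs12
      · exact h
    refine ⟨u, v, huM, hvM, pp, qq.reverse, hppPath, hqqPath.reverse, ?_, hppM, ?_⟩
    · intro z h1 h2
      exact hdisj z h1 (by simpa [Walk.support_reverse] using h2)
    · intro z hz hzM
      exact hqqM z (by simpa [Walk.support_reverse] using hz) hzM
  · -- pp starts at t'
    obtain rfl : s₂ = s' := by
      rcases hs₂ with h | h
      · exact h
      · exact absurd h.symm hs12
    refine ⟨v, u, hvM, huM, qq, pp.reverse, hqqPath, hppPath.reverse, ?_, hqqM, ?_⟩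
    · intro z h1 h2
      exact hdisj z (by simpa [Walk.support_reverse] using h2) h1
    · intro z hz hzM
      exact hppM z (by simpa [Walk.support_reverse] using hz) hzM
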